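/- arXiv:math/0501518 — 10 statements merged into one kernel-verified Lean document; each statement's English description precedes it below -/
import Mathlib

section
/- Let A be a commutative ring with 1 and let Φ_t = 1 + tφ₁ + ⋯ + t^m φ_m be a formal automorphism of order m on A (additive maps φ_i with φ₀ = id satisfying φ_n(ab) = Σ_{i=0}^n φ_i(a)φ_{n-i}(b) for all 0 ≤ n ≤ m). Define the Hochschild 2-cochain Ob(Φ_t) : A ⊗ A → A by Ob(Φ_t)(a ⊗ b) = − Σ_{i=1}^m φ_i(a) φ_{m+1−i}(b). Then Ob(Φ_t) is a Hochschild 2-cocycle: for all a,b,c ∈ A, a·Ob(Φ_t)(b⊗c) − Ob(Φ_t)(ab⊗c) + Ob(Φ_t)(a⊗bc) − Ob(Φ_t)(a⊗b)·c = 0. -/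
/-!
Write `S(x, y) = Σ_{i=1}^m φ_i(x) φ_{m+1-i}(y)`, so that `Ob = -S`. Expanding `φ_i(ab)` in
`S(ab, c)` by the Leibniz rule of order `i ≤ m` splits off the term `a·S(b, c)` (from `φ₀(a) = a`),
and expanding `φ_{m+1-i}(bc)` in `S(a, bc)` splits off `S(a, b)·c`. What remains in both cases is
the same triple sum `Σ φ_i(a) φ_j(b) φ_k(c)` over `i + j + k = m + 1` with `i, k ≥ 1`, which cancels
in the coboundary. Commutativity plays no role.
-/

open Finset

section FormalAutomorphism

variable {A : Type*} [Semiring A]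

structure IsFormalAutomorphism (φ : ℕ → A →+ A) (m : ℕ) : Prop where
  map_zero_eq_id : φ 0 = AddMonoidHom.id A
  map_mul : ∀ n ≤ m, ∀ a b : A,
    φ n (a * b) = ∑ i ∈ range (n + 1), φ i a * φ (n - i) b

def obstructionSum (φ : ℕ → A →+ A) (m : ℕ) (a b : A) : A :=
  ∑ i ∈ Icc 1 m, φ i a * φ (m + 1 - i) b

/-- `Σ φ_i(a) φ_j(b) φ_k(c)` over `i + j + k = m + 1` with `i, k ≥ 1`. -/
def obstructionTripleSum (φ : ℕ → A →+ A) (m : ℕ) (a b c : A) : A :=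
  ∑ i ∈ Icc 1 m, ∑ j ∈ range (m + 1 - i), φ i a * φ j b * φ (m + 1 - i - j) c

theorem sum_Icc_sum_Icc_sub_eq_sum_Icc_sum_range {M : Type*} [AddCommMonoid M] (m : ℕ)
    (f : ℕ → ℕ → ℕ → M) :
    ∑ i ∈ Icc 1 m, ∑ j ∈ Icc 1 i, f j (i - j) (m + 1 - i) =
      ∑ i ∈ Icc 1 m, ∑ j ∈ range (m + 1 - i), f i j (m + 1 - i - j) := by
  rw [sum_comm' (t' := Icc 1 m) (s' := fun j => Icc j m)
    (by intro i j; simp only [mem_Icc]; omega)]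
  refine sum_congr rfl fun i _ => ?_
  rw [← Ico_add_one_right_eq_Icc, sum_Ico_eq_sum_range]
  refine sum_congr rfl fun j _ => ?_
  rw [Nat.add_sub_cancel_left, Nat.sub_sub]

namespace IsFormalAutomorphism

variable {φ : ℕ → A →+ A} {m : ℕ}

theorem obstructionSum_mul_left (hφ : IsFormalAutomorphism φ m) (a b c : A) :
    obstructionSum φ m (a * b) c =
      a * obstructionSum φ m b c + obstructionTripleSum φ m a b c := by
  have expand : ∀ i ∈ Icc 1 m, φ i (a * b) * φ (m + 1 - i) c =
      a * (φ i b * φ (m + 1 - i) c) +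
        ∑ j ∈ Icc 1 i, φ j a * φ (i - j) b * φ (m + 1 - i) c := by
    intro i hi
    rw [hφ.map_mul i (mem_Icc.1 hi).2, range_eq_Ico, sum_eq_sum_Ico_succ_bot i.succ_pos,
      Nat.succ_eq_add_one, zero_add, Ico_add_one_right_eq_Icc, add_mul, sum_mul, hφ.map_zero_eq_id, Nat.sub_zero,
      AddMonoidHom.id_apply, mul_assoc]
  rw [obstructionSum, sum_congr rfl expand, sum_add_distrib, ← mul_sum, obstructionSum,
    obstructionTripleSum, sum_Icc_sum_Icc_sub_eq_sum_Icc_sum_range m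
      fun i j k => φ i a * φ j b * φ k c]

theorem obstructionSum_mul_right (hφ : IsFormalAutomorphism φ m) (a b c : A) :
    obstructionSum φ m a (b * c) =
      obstructionTripleSum φ m a b c + obstructionSum φ m a b * c := by
  have expand : ∀ i ∈ Icc 1 m, φ i a * φ (m + 1 - i) (b * c) =
      ∑ j ∈ range (m + 1 - i), φ i a * φ j b * φ (m + 1 - i - j) c +
        φ i a * φ (m + 1 - i) b * c := by
    intro i hi
    rw [hφ.map_mul (m + 1 - i) (by simp only [mem_Icc] at hi; omega), sum_range_succ, mul_add,
      mul_sum, Nat.sub_self, hφ.map_zero_eq_id, AddMonoidHom.id_apply]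
    simp only [mul_assoc]
  rw [obstructionSum, sum_congr rfl expand, sum_add_distrib, ← sum_mul, obstructionSum,
    obstructionTripleSum]

end IsFormalAutomorphism

end FormalAutomorphism

theorem IsFormalAutomorphism.obstructionSum_isCocycle {A : Type*} [Ring A] {φ : ℕ → A →+ A}
    {m : ℕ} (hφ : IsFormalAutomorphism φ m) (a b c : A) :
    a * obstructionSum φ m b c - obstructionSum φ m (a * b) c + obstructionSum φ m a (b * c) -
      obstructionSum φ m a b * c = 0 := by
  rw [hφ.obstructionSum_mul_left, hφ.obstructionSum_mul_right]
  abel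

theorem stmt_3_general {A : Type*} [CommRing A] (m : ℕ) (φ : ℕ → A →+ A)
    (h0 : φ 0 = AddMonoidHom.id A)
    (hmul : ∀ n, n ≤ m → ∀ a b : A,
      φ n (a * b) = ∑ i ∈ Finset.range (n + 1), φ i a * φ (n - i) b)
    (Ob : A →+ A →+ A)
    (hOb : ∀ a b : A, Ob a b = -∑ i ∈ Finset.Icc 1 m, φ i a * φ (m + 1 - i) b) :
    ∀ a b c : A, a * Ob b c - Ob (a * b) c + Ob a (b * c) - Ob a b * c = 0 := by
  intro a b c
  have hOb' : ∀ x y : A, Ob x y = -obstructionSum φ m x y := hOb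
  rw [hOb', hOb', hOb', hOb']
  linear_combination -(IsFormalAutomorphism.obstructionSum_isCocycle ⟨h0, hmul⟩ a b c)

/-- The obstruction class `Ob(Φ_t)(a⊗b) = -Σ_{i=1}^m φ_i(a)φ_{m+1-i}(b)` of a formal
automorphism of order `m` is a Hochschild 2-cocycle. -/
theorem stmt_3 {A : Type*} [CommRing A] (m : ℕ) (hm : 1 ≤ m) (φ : ℕ → A →+ A)
    (h0 : φ 0 = AddMonoidHom.id A)
    (hmul : ∀ n, n ≤ m → ∀ a b : A,
      φ n (a * b) = ∑ i ∈ Finset.range (n + 1), φ i a * φ (n - i) b)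
    (Ob : A →+ A →+ A)
    (hOb : ∀ a b : A, Ob a b = -∑ i ∈ Finset.Icc 1 m, φ i a * φ (m + 1 - i) b) :
    ∀ a b c : A, a * Ob b c - Ob (a * b) c + Ob a (b * c) - Ob a b * c = 0 :=
  stmt_3_general m φ h0 hmul Ob hOb
end

section
/- Let A be a commutative ring with 1 such that every Hochschild 2-cocycle on A (with coefficients in A over ℤ) is a 2-coboundary, i.e. HH²(A) = 0. Let m ≥ 1 and let φ be a derivation on A. Then there exist additive maps φ_{m+1}, φ_{m+2}, … such that Φ_t = 1 + t^m φ + t^{m+1}φ_{m+1} + t^{m+2}φ_{m+2} + ⋯ is a formal automorphism on A, i.e. its coefficients ψ_n (with ψ₀ = id, ψ_m = φ, ψ_n = 0 for 0 < n < m, ψ_n = φ_n for n > m) satisfy ψ_n(ab) = Σ_{i=0}^n ψ_i(a)ψ_{n−i}(b) for all n ≥ 0 and a,b ∈ A. -/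
/-!
The coefficients are built recursively. Once `ψ₀, …, ψₙ₋₁` satisfy the Leibniz rule in degrees
`< n`, the Leibniz rule in degree `n` says that the Hochschild coboundary of `ψₙ` is minus the
obstruction `fₙ(a, b) = ∑_{0<i<n} ψᵢ(a) ψₙ₋ᵢ(b)`. This obstruction is a 2-cocycle: the truncation
`U(x) = ∑_{i<n} ψᵢ(x) tⁱ` satisfies `U(xy) ≡ U(x) U(y) mod tⁿ` with `fₙ(x, y)` as `tⁿ`-coefficient
of `U(x) U(y)`, and computing the `tⁿ`-coefficient of `U(x) U(y) U(z)` through both bracketings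
gives the cocycle identity. As `HH²(A) = 0`, `fₙ = δg` and `ψₙ = -g` works. Up to degree `m` the
obstruction vanishes, and the Leibniz rule in degree `m` is the derivation property of `φ`.
-/

open Finset PowerSeries

theorem Finset.sum_range_succ_eq_add_sum_Ico_one_add {M : Type*} [AddCommMonoid M] (f : ℕ → M)
    {n : ℕ} (hn : 0 < n) :
    ∑ i ∈ range (n + 1), f i = f 0 + ∑ i ∈ Ico 1 n, f i + f n := by
  rw [sum_range_succ, range_eq_Ico, sum_eq_sum_Ico_succ_bot hn]

theorem PowerSeries.coeff_mul_of_coeff_eq_of_lt {R : Type*} [Ring R] {n : ℕ} {P Q : R⟦X⟧}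
    (h : ∀ k < n, coeff k P = coeff k Q) (S : R⟦X⟧) :
    coeff n (P * S) = coeff n (Q * S) + (coeff n P - coeff n Q) * coeff 0 S := by
  have hD : coeff n ((P - Q) * S) = coeff n (P - Q) * coeff 0 S := by
    rw [coeff_mul, sum_eq_single_of_mem (n, 0) (by simp)]
    rintro ⟨i, j⟩ hij hne
    have hi : i < n := by
      rw [HasAntidiagonal.mem_antidiagonal] at hij
      by_contra! hni
      exact hne (Prod.ext (by omega) (by omega))
    rw [map_sub, h i hi, sub_self, zero_mul]
  rw [← map_sub, ← hD, ← map_add, sub_mul, add_sub_cancel]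

section

variable {A : Type*} [CommRing A]

def IsHochschildCocycle (f : A →+ A →+ A) : Prop :=
  ∀ a b c : A, a * f b c - f (a * b) c + f a (b * c) - f a b * c = 0

def IsHochschildCoboundary (f : A →+ A →+ A) (g : A →+ A) : Prop :=
  ∀ a b : A, f a b = a * g b - g (a * b) + g a * b

namespace FormalAutomorphism

def LeibnizAt (ψ : ℕ → A →+ A) (n : ℕ) : Prop :=
  ∀ a b : A, ψ n (a * b) = ∑ i ∈ range (n + 1), ψ i a * ψ (n - i) b

def obstruction (ψ : ℕ → A →+ A) (n : ℕ) : A →+ A →+ A :=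
  ∑ i ∈ Ico 1 n, (AddMonoidHom.mul.comp (ψ i)).compl₂ (ψ (n - i))

@[simp]
theorem obstruction_apply (ψ : ℕ → A →+ A) (n : ℕ) (a b : A) :
    obstruction ψ n a b = ∑ i ∈ Ico 1 n, ψ i a * ψ (n - i) b := by
  simp [obstruction]

theorem obstruction_congr {ψ ψ' : ℕ → A →+ A} {n : ℕ} (h : ∀ i, 0 < i → i < n → ψ i = ψ' i) :
    obstruction ψ n = obstruction ψ' n := by
  refine sum_congr rfl fun i hi => ?_
  rw [mem_Ico] at hi
  rw [h i hi.1 hi.2, h (n - i) (by omega) (by omega)]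

theorem obstruction_eq_zero {ψ : ℕ → A →+ A} {n : ℕ} (h : ∀ i, 0 < i → i < n → ψ i = 0) :
    obstruction ψ n = 0 := by
  ext a b
  rw [obstruction_apply]
  refine sum_eq_zero fun i hi => ?_
  rw [mem_Ico] at hi
  rw [h i hi.1 hi.2, AddMonoidHom.zero_apply, zero_mul]

theorem leibnizAt_iff {ψ : ℕ → A →+ A} {n : ℕ} (hn : 0 < n) (h0 : ψ 0 = AddMonoidHom.id A) :
    LeibnizAt ψ n ↔ ∀ a b : A, ψ n (a * b) = a * ψ n b + ψ n a * b + obstruction ψ n a b := by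
  simp only [LeibnizAt, sum_range_succ_eq_add_sum_Ico_one_add _ hn, obstruction_apply, h0,
    Nat.sub_zero, Nat.sub_self, AddMonoidHom.id_apply]
  exact forall₂_congr fun a b => by rw [add_right_comm]

theorem isHochschildCocycle_obstruction {ψ : ℕ → A →+ A} {n : ℕ} (hn : 0 < n)
    (h0 : ψ 0 = AddMonoidHom.id A) (hψ : ∀ k < n, LeibnizAt ψ k) :
    IsHochschildCocycle (obstruction ψ n) := by
  let U : A → A⟦X⟧ := fun x => mk fun i => if i < n then ψ i x else 0
  have coeff_zero_U x : coeff 0 (U x) = x := by simp [U, hn, h0]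
  have coeff_U x : coeff n (U x) = 0 := by simp [U]
  have coeff_U_mul_U x y : coeff n (U x * U y) = obstruction ψ n x y := by
    rw [coeff_mul, Nat.sum_antidiagonal_eq_sum_range_succ_mk,
      sum_range_succ_eq_add_sum_Ico_one_add _ hn, obstruction_apply]
    simp only [U, coeff_mk, Nat.sub_zero, Nat.sub_self, lt_irrefl, if_false, mul_zero, zero_mul,
      add_zero, zero_add]
    refine sum_congr rfl fun i hi => ?_
    rw [mem_Ico] at hi
    rw [if_pos hi.2, if_pos (by omega)]
  have coeff_U_mul_of_lt x y : ∀ k < n, coeff k (U (x * y)) = coeff k (U x * U y) := by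
    intro k hk
    rw [coeff_mul, Nat.sum_antidiagonal_eq_sum_range_succ_mk]
    simp only [U, coeff_mk, if_pos hk, hψ k hk x y]
    refine sum_congr rfl fun i hi => ?_
    rw [mem_range] at hi
    rw [if_pos (by omega), if_pos (by omega)]
  have obstruction_mul_left x y z :
      obstruction ψ n (x * y) z = coeff n (U x * U y * U z) - obstruction ψ n x y * z := by
    rw [← coeff_U_mul_U, coeff_mul_of_coeff_eq_of_lt (coeff_U_mul_of_lt x y), coeff_U,
      coeff_U_mul_U, coeff_zero_U]
    ring
  have obstruction_mul_right x y z :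
      obstruction ψ n x (y * z) = coeff n (U x * U y * U z) - x * obstruction ψ n y z := by
    rw [← coeff_U_mul_U, mul_comm, coeff_mul_of_coeff_eq_of_lt (coeff_U_mul_of_lt y z), coeff_U,
      coeff_U_mul_U, coeff_zero_U, mul_comm (U y * U z), ← mul_assoc]
    ring
  intro a b c
  rw [obstruction_mul_left, obstruction_mul_right]
  ring

def extension (m : ℕ) (φ : A →+ A) (primitive : (A →+ A →+ A) → A →+ A) : ℕ → A →+ A :=
  Nat.strongRec fun n ψ =>
    if n = 0 then AddMonoidHom.id A
    else if n < m then 0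
    else if n = m then φ
    else -primitive (obstruction (fun i => if h : i < n then ψ i h else 0) n)

variable (m : ℕ) (φ : A →+ A) (primitive : (A →+ A →+ A) → A →+ A)

theorem extension_zero : extension m φ primitive 0 = AddMonoidHom.id A := by
  rw [extension, Nat.strongRec_eq]
  rfl

theorem extension_of_lt {n : ℕ} (hn : 0 < n) (hnm : n < m) : extension m φ primitive n = 0 := by
  rw [extension, Nat.strongRec_eq, if_neg hn.ne', if_pos hnm]

theorem extension_self (hm : 0 < m) : extension m φ primitive m = φ := by
  rw [extension, Nat.strongRec_eq, if_neg hm.ne', if_neg (lt_irrefl m), if_pos rfl]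

theorem extension_of_gt {n : ℕ} (hmn : m < n) :
    extension m φ primitive n = -primitive (obstruction (extension m φ primitive) n) := by
  rw [extension, Nat.strongRec_eq, if_neg (by omega), if_neg (by omega), if_neg (by omega)]
  congr 2
  exact obstruction_congr fun i _ hi => dif_pos hi

theorem leibnizAt_extension {m : ℕ} (hm : 0 < m) {φ : A →+ A}
    (hφ : ∀ a b : A, φ (a * b) = a * φ b + φ a * b) {primitive : (A →+ A →+ A) → A →+ A}
    (hprimitive : ∀ f, IsHochschildCocycle f → IsHochschildCoboundary f (primitive f)) (n : ℕ) :
    LeibnizAt (extension m φ primitive) n := by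
  induction n using Nat.strong_induction_on with
  | _ n ih =>
  rcases Nat.eq_zero_or_pos n with rfl | hn
  · simp [LeibnizAt, extension_zero]
  rw [leibnizAt_iff hn (extension_zero m φ primitive)]
  intro a b
  rcases lt_trichotomy n m with hnm | rfl | hmn
  · rw [extension_of_lt m φ primitive hn hnm,
      obstruction_eq_zero fun i hi hin => extension_of_lt m φ primitive hi (hin.trans hnm)]
    simp
  · rw [extension_self n φ primitive hm,
      obstruction_eq_zero fun i hi hin => extension_of_lt n φ primitive hi hin]
    simp [hφ]
  · have hcocycle := isHochschildCocycle_obstruction hn (extension_zero m φ primitive) ih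
    rw [extension_of_gt m φ primitive hmn, hprimitive _ hcocycle a b]
    simp only [AddMonoidHom.neg_apply]
    ring

end FormalAutomorphism

end

/-- If every Hochschild 2-cocycle on `A` is a 2-coboundary (`HH²(A) = 0`), then for any
derivation `φ` and any `m ≥ 1`, the order-`m` formal automorphism `1 + tᵐ φ` extends to
a (full) formal automorphism `1 + tᵐ φ + t^{m+1} φ_{m+1} + ⋯`. -/
theorem stmt_5 {A : Type*} [CommRing A]
    (hHH2 : ∀ f : A →+ A →+ A,
      (∀ a b c : A, a * f b c - f (a * b) c + f a (b * c) - f a b * c = 0) →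
      ∃ g : A →+ A, ∀ a b : A, f a b = a * g b - g (a * b) + g a * b)
    (m : ℕ) (hm : 1 ≤ m) (φ : A →+ A)
    (hder : ∀ a b : A, φ (a * b) = a * φ b + φ a * b) :
    ∃ ψ : ℕ → A →+ A, ψ 0 = AddMonoidHom.id A ∧ ψ m = φ ∧
      (∀ i, 0 < i → i < m → ψ i = 0) ∧
      (∀ (n : ℕ) (a b : A),
        ψ n (a * b) = ∑ i ∈ Finset.range (n + 1), ψ i a * ψ (n - i) b) := by
  have exists_primitive :
      ∀ f : A →+ A →+ A, ∃ g, IsHochschildCocycle f → IsHochschildCoboundary f g := by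
    intro f
    by_cases hf : IsHochschildCocycle f
    · obtain ⟨g, hg⟩ := hHH2 f hf
      exact ⟨g, fun _ => hg⟩
    · exact ⟨0, fun hf' => absurd hf' hf⟩
  choose primitive hprimitive using exists_primitive
  open FormalAutomorphism in
  exact ⟨extension m φ primitive, extension_zero m φ primitive, extension_self m φ primitive hm,
    fun i => extension_of_lt m φ primitive, leibnizAt_extension hm hder hprimitive⟩
end

section
/- Let A be a commutative ring and let E be a commutative monoid (written additively) such that for each α ∈ E the set of pairs (β,γ) with β + γ = α is finite. Given s : E → End(A), define for f : E → End(A) the map (d¹₁ f)_α(a⊗b) = Σ_{β+γ=α} s_β(a)·f_γ(b) − f_α(ab) + Σ_{β+γ=α} f_β(a)·s_γ(b), and for g : E → Hom(A⊗A, A) define (d²₁ g)_α(a⊗b⊗c) = Σ_{β+γ=α} s_β(a)·g_γ(b⊗c) − g_α(ab⊗c) + g_α(a⊗bc) − Σ_{β+γ=α} g_β(a⊗b)·s_γ(c). Assume s satisfies the Cartan formula s_α(ab) = Σ_{β+γ=α} s_β(a) s_γ(b) for all α ∈ E and a,b ∈ A. Then d²₁ ∘ d¹₁ = 0. -/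
/-! Fix `a, b, c` and view `β ↦ s_β(a)`, `β ↦ f_β(b)` as functions `E → A`, multiplied by
convolution over the antidiagonals of `E`; this product is associative and bilinear. In this
language the Cartan formula says `S(ab) = S(a) ⋆ S(b)`, and `d¹₁ f` is
`S(a) ⋆ F(b) - F(ab) + F(a) ⋆ S(b)`. Expanding `d²₁ (d¹₁ f)` produces twelve terms which cancel
in pairs once `S(ab)` and `S(bc)` are rewritten by the Cartan formula. -/

open Finset

section Antidiagonal

variable {E : Type*} [AddMonoid E] [HasAntidiagonal E]

theorem Finset.sum_antidiagonal_antidiagonal_assoc {M : Type*} [AddCommMonoid M] (n : E)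
    (f : E → E → E → M) :
    ∑ p ∈ antidiagonal n, ∑ q ∈ antidiagonal p.2, f p.1 q.1 q.2 =
      ∑ p ∈ antidiagonal n, ∑ q ∈ antidiagonal p.1, f q.1 q.2 p.2 := by
  simp only [sum_sigma']
  apply sum_nbij' (fun ⟨⟨i, _⟩, ⟨k, l⟩⟩ ↦ ⟨(i + k, l), (i, k)⟩)
    (fun ⟨⟨_, j⟩, ⟨k, l⟩⟩ ↦ ⟨(k, l + j), (l, j)⟩) <;> aesop (add simp [add_assoc])

variable {A : Type*}

def antidiagonalConv [Mul A] [AddCommMonoid A] (u v : E → A) (n : E) : A :=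
  ∑ p ∈ antidiagonal n, u p.1 * v p.2

local infixl:70 " ⋆ " => antidiagonalConv

section Distrib

variable [NonUnitalNonAssocRing A] (u v w : E → A)

theorem antidiagonalConv_add : u ⋆ (v + w) = u ⋆ v + u ⋆ w :=
  funext fun _ ↦ by simp only [antidiagonalConv, Pi.add_apply, mul_add, sum_add_distrib]

theorem add_antidiagonalConv : (u + v) ⋆ w = u ⋆ w + v ⋆ w :=
  funext fun _ ↦ by simp only [antidiagonalConv, Pi.add_apply, add_mul, sum_add_distrib]

theorem antidiagonalConv_sub : u ⋆ (v - w) = u ⋆ v - u ⋆ w :=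
  funext fun _ ↦ by simp only [antidiagonalConv, Pi.sub_apply, mul_sub, sum_sub_distrib]

theorem sub_antidiagonalConv : (u - v) ⋆ w = u ⋆ w - v ⋆ w :=
  funext fun _ ↦ by simp only [antidiagonalConv, Pi.sub_apply, sub_mul, sum_sub_distrib]

end Distrib

theorem antidiagonalConv_assoc [NonUnitalSemiring A] (u v w : E → A) :
    u ⋆ v ⋆ w = u ⋆ (v ⋆ w) :=
  funext fun n ↦ by
    simp only [antidiagonalConv, sum_mul, mul_sum, mul_assoc]
    exact (sum_antidiagonal_antidiagonal_assoc n fun i j k ↦ u i * (v j * w k)).symm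

section CartanComplex

variable [NonUnitalRing A] (S : A → E → A)

/-- `d¹₁`, with `F a β = f_β(a)` and `S a β = s_β(a)`. -/
def cartanD1 (F : A → E → A) (a b : A) : E → A :=
  S a ⋆ F b - F (a * b) + F a ⋆ S b

/-- `d²₁`, with `G a b β = g_β(a ⊗ b)` and `S a β = s_β(a)`. -/
def cartanD2 (G : A → A → E → A) (a b c : A) : E → A :=
  S a ⋆ G b c - G (a * b) c + G a (b * c) - G a b ⋆ S c

theorem cartanD2_cartanD1 (hS : ∀ a b, S (a * b) = S a ⋆ S b) (F : A → E → A) (a b c : A) :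
    cartanD2 S (cartanD1 S F) a b c = 0 := by
  simp only [cartanD2, cartanD1, hS, antidiagonalConv_add, add_antidiagonalConv,
    antidiagonalConv_sub, sub_antidiagonalConv, antidiagonalConv_assoc, mul_assoc]
  abel

end CartanComplex

end Antidiagonal

/-- In the Cartan part of the deformation complex, `d²₁ ∘ d¹₁ = 0`, given the Cartan
formula for `s` and finiteness of decompositions in the monoid `E`. -/
theorem stmt_8 {A : Type*} [CommRing A] {E : Type*} [AddCommMonoid E]
    (D : E → Finset (E × E)) (hD : ∀ (α : E) (p : E × E), p ∈ D α ↔ p.1 + p.2 = α)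
    (s : E → A →+ A)
    (hcartan : ∀ (α : E) (a b : A), s α (a * b) = ∑ p ∈ D α, s p.1 a * s p.2 b)
    (f : E → A →+ A) (g : E → A →+ A →+ A)
    (hg : ∀ (α : E) (a b : A),
      g α a b = (∑ p ∈ D α, s p.1 a * f p.2 b) - f α (a * b)
        + ∑ p ∈ D α, f p.1 a * s p.2 b) :
    ∀ (α : E) (a b c : A),
      (∑ p ∈ D α, s p.1 a * g p.2 b c) - g α (a * b) c + g α a (b * c)
        - ∑ p ∈ D α, g p.1 a b * s p.2 c = 0 := by
  let : HasAntidiagonal E := ⟨D, hD _ _⟩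
  let S : A → E → A := fun a β ↦ s β a
  have hS : ∀ a b, S (a * b) = antidiagonalConv (S a) (S b) :=
    fun a b ↦ funext (hcartan · a b)
  have hG : (fun a b β ↦ g β a b) = cartanD1 S (fun a β ↦ f β a) :=
    funext fun a ↦ funext fun b ↦ funext fun β ↦ hg β a b
  intro α a b c
  have h := congrFun (cartanD2_cartanD1 S hS (fun a β ↦ f β a) a b c) α
  rw [← hG] at h
  exact h
end

section
/- Let A be a commutative ring, E a commutative monoid with finite decompositions, s : E → End(A) satisfying the Cartan formula, and let s¹, …, s^m : E → End(A) (with s⁰ = s) satisfy the Cartan formula up to order m: s^n_α(ab) = Σ_{i=0}^n Σ_{β+γ=α} s^i_β(a) s^{n−i}_γ(b) for all 0 ≤ n ≤ m. Define Ob₁ : E → Hom(A⊗A,A) by (Ob₁)_α(a⊗b) = − Σ_{i=1}^m Σ_{β+γ=α} s^i_β(a) s^{m+1−i}_γ(b). Then Ob₁ is a 2-cocycle for d²₁: for all α ∈ E and a,b,c ∈ A, Σ_{β+γ=α} s_β(a)(Ob₁)_γ(b⊗c) − (Ob₁)_α(ab⊗c) + (Ob₁)_α(a⊗bc) − Σ_{β+γ=α}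 (Ob₁)_β(a⊗b) s_γ(c) = 0. -/
/-!
After expanding with the Cartan formulas, each of the four terms of `d²₁ Ob₁` becomes a sum of
triple products `s^i_β(a) s^j_γ(b) s^k_δ(c)` over `β + γ + δ = α`, for certain index triples with
`i + j + k = m + 1`; only Cartan formulas of order `≤ m` are needed because `1 ≤ i ≤ m` in `Ob₁`.
The terms `s_0(a) Ob₁(b ⊗ c)` and `Ob₁(a ⊗ bc)` together run over all such triples except the
corners `(m+1,0,0)`, `(0,m+1,0)`, `(0,0,m+1)`, and so do `Ob₁(ab ⊗ c)` and `Ob₁(a ⊗ b) s_0(c)`.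
The two sums agree by associativity of decompositions, in `E` and in `ℕ`.
-/

open Finset

theorem sum_decomp_fst_eq_sum_decomp_snd {M E : Type*} [AddCommMonoid M] [AddSemigroup E]
    (D : E → Finset (E × E)) (hD : ∀ (α : E) (p : E × E), p ∈ D α ↔ p.1 + p.2 = α)
    (α : E) (F : E → E → E → M) :
    ∑ p ∈ D α, ∑ q ∈ D p.1, F q.1 q.2 p.2 = ∑ p ∈ D α, ∑ q ∈ D p.2, F p.1 q.1 q.2 := by
  rw [sum_sigma', sum_sigma']
  apply sum_nbij' (fun ⟨⟨_, γ⟩, ⟨β₁, β₂⟩⟩ ↦ ⟨(β₁, β₂ + γ), (β₂, γ)⟩)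
    (fun ⟨⟨β, _⟩, ⟨γ₁, γ₂⟩⟩ ↦ ⟨(β + γ₁, γ₂), (β, γ₁)⟩) <;> aesop (add simp [hD, add_assoc])

theorem sum_range_sum_range_assoc {M : Type*} [AddCommMonoid M] (n : ℕ) (G : ℕ → ℕ → ℕ → M) :
    ∑ i ∈ range (n + 1), ∑ j ∈ range (i + 1), G j (i - j) (n - i)
      = ∑ i ∈ range (n + 1), ∑ j ∈ range (n - i + 1), G i j (n - i - j) := by
  simpa only [Nat.sum_antidiagonal_eq_sum_range_succ_mk] using
    sum_decomp_fst_eq_sum_decomp_snd (fun n ↦ antidiagonal n) (fun _ _ ↦ mem_antidiagonal) n G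

theorem sum_range_add_two {M : Type*} [AddCommMonoid M] (n : ℕ) (f : ℕ → M) :
    ∑ i ∈ range (n + 1 + 1), f i = f 0 + ∑ i ∈ Icc 1 n, f i + f (n + 1) := by
  rw [sum_range_succ, range_eq_Ico, sum_eq_sum_Ico_succ_bot (by omega), Ico_add_one_right_eq_Icc]

theorem sum_Icc_triple_assoc {M : Type*} [AddCancelCommMonoid M] (m : ℕ) (G : ℕ → ℕ → ℕ → M) :
    ∑ i ∈ Icc 1 m, G 0 i (m + 1 - i)
        + ∑ i ∈ Icc 1 m, ∑ j ∈ range (m + 1 - i + 1), G i j (m + 1 - i - j)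
      = ∑ i ∈ Icc 1 m, ∑ j ∈ range (i + 1), G j (i - j) (m + 1 - i)
        + ∑ i ∈ Icc 1 m, G i (m + 1 - i) 0 := by
  have h := sum_range_sum_range_assoc (m + 1) G
  simp only [sum_range_add_two, Nat.sub_zero, Nat.sub_self, zero_add, sum_range_one] at h
  refine add_left_cancel (a := G 0 0 (m + 1) + G 0 (m + 1) 0 + G (m + 1) 0 0) ?_
  convert h.symm using 1 <;> abel

section CartanTriple

variable {A E : Type*} [Semiring A] (D : E → Finset (E × E))
  (s : ℕ → E → A → A) (α : E) (a b c : A)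

def cartanTripleSum (i j k : ℕ) : A :=
  ∑ p ∈ D α, ∑ q ∈ D p.2, s i p.1 a * (s j q.1 b * s k q.2 c)

theorem sum_mul_sum_eq_cartanTripleSum (i j k : ℕ) :
    ∑ p ∈ D α, s i p.1 a * ∑ q ∈ D p.2, s j q.1 b * s k q.2 c
      = cartanTripleSum D s α a b c i j k := by
  simp only [mul_sum]
  rfl

theorem sum_sum_mul_eq_cartanTripleSum [AddSemigroup E]
    (hD : ∀ (α : E) (p : E × E), p ∈ D α ↔ p.1 + p.2 = α) (i j k : ℕ) :
    ∑ p ∈ D α, (∑ q ∈ D p.1, s i q.1 a * s j q.2 b) * s k p.2 c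
      = cartanTripleSum D s α a b c i j k := by
  simp only [sum_mul, mul_assoc]
  exact sum_decomp_fst_eq_sum_decomp_snd D hD α fun β γ δ ↦ s i β a * (s j γ b * s k δ c)

def CartanFormula (n : ℕ) : Prop :=
  ∀ (β : E) (x y : A), s n β (x * y) = ∑ i ∈ range (n + 1), ∑ p ∈ D β, s i p.1 x * s (n - i) p.2 y

variable {n : ℕ}

theorem sum_cartan_mul [AddSemigroup E] (hD : ∀ (α : E) (p : E × E), p ∈ D α ↔ p.1 + p.2 = α)
    (hn : CartanFormula D s n) (k : ℕ) :
    ∑ p ∈ D α, s n p.1 (a * b) * s k p.2 c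
      = ∑ j ∈ range (n + 1), cartanTripleSum D s α a b c j (n - j) k := by
  simp only [hn _, sum_mul (range (n + 1))]
  rw [sum_comm]
  simp only [sum_sum_mul_eq_cartanTripleSum D s α a b c hD]

theorem sum_mul_cartan (hn : CartanFormula D s n) (i : ℕ) :
    ∑ p ∈ D α, s i p.1 a * s n p.2 (b * c)
      = ∑ j ∈ range (n + 1), cartanTripleSum D s α a b c i j (n - j) := by
  simp only [hn _, mul_sum (range (n + 1))]
  rw [sum_comm]
  simp only [sum_mul_sum_eq_cartanTripleSum]

end CartanTriple

theorem stmt_11_general {A : Type*} [CommRing A] {E : Type*} [AddCommMonoid E]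
    (D : E → Finset (E × E)) (hD : ∀ (α : E) (p : E × E), p ∈ D α ↔ p.1 + p.2 = α)
    (m : ℕ) (s : ℕ → E → A →+ A)
    (hcartan : ∀ n, n ≤ m → ∀ (α : E) (a b : A),
      s n α (a * b) =
        ∑ i ∈ Finset.range (n + 1), ∑ p ∈ D α, s i p.1 a * s (n - i) p.2 b)
    (Ob : E → A →+ A →+ A)
    (hOb : ∀ (α : E) (a b : A),
      Ob α a b = -∑ i ∈ Finset.Icc 1 m, ∑ p ∈ D α, s i p.1 a * s (m + 1 - i) p.2 b) :
    ∀ (α : E) (a b c : A),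
      (∑ p ∈ D α, s 0 p.1 a * Ob p.2 b c) - Ob α (a * b) c + Ob α a (b * c)
        - ∑ p ∈ D α, Ob p.1 a b * s 0 p.2 c = 0 := by
  intro α a b c
  set S : ℕ → E → A → A := fun n β ↦ s n β
  set T := cartanTripleSum D S α a b c
  have h₀ : ∑ p ∈ D α, s 0 p.1 a * Ob p.2 b c = -∑ i ∈ Icc 1 m, T 0 i (m + 1 - i) := by
    simp only [hOb, mul_neg, sum_neg_distrib, mul_sum (Icc 1 m)]
    rw [sum_comm]
    simp only [sum_mul_sum_eq_cartanTripleSum D S, T, S]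
  have h₁ : Ob α (a * b) c = -∑ i ∈ Icc 1 m, ∑ j ∈ range (i + 1), T j (i - j) (m + 1 - i) := by
    rw [hOb]
    congr 1
    exact sum_congr rfl fun i hi ↦
      sum_cartan_mul D S α a b c hD (hcartan i (mem_Icc.1 hi).2) _
  have h₂ : Ob α a (b * c) =
      -∑ i ∈ Icc 1 m, ∑ j ∈ range (m + 1 - i + 1), T i j (m + 1 - i - j) := by
    rw [hOb]
    congr 1
    exact sum_congr rfl fun i hi ↦
      sum_mul_cartan D S α a b c (hcartan (m + 1 - i) (by grind)) i
  have h₃ : ∑ p ∈ D α, Ob p.1 a b * s 0 p.2 c = -∑ i ∈ Icc 1 m, T i (m + 1 - i) 0 := by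
    simp only [hOb, neg_mul, sum_neg_distrib, sum_mul (Icc 1 m)]
    rw [sum_comm]
    simp only [sum_sum_mul_eq_cartanTripleSum D S α a b c hD, T, S]
  rw [h₀, h₁, h₂, h₃]
  linear_combination -sum_Icc_triple_assoc m T

/-- The Cartan part `Ob₁` of the obstruction class of an order-`m` formal deformation
is a `d²₁`-cocycle. -/
theorem stmt_11 {A : Type*} [CommRing A] {E : Type*} [AddCommMonoid E]
    (D : E → Finset (E × E)) (hD : ∀ (α : E) (p : E × E), p ∈ D α ↔ p.1 + p.2 = α)
    (m : ℕ) (hm : 1 ≤ m) (s : ℕ → E → A →+ A)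
    (hcartan : ∀ n, n ≤ m → ∀ (α : E) (a b : A),
      s n α (a * b) =
        ∑ i ∈ Finset.range (n + 1), ∑ p ∈ D α, s i p.1 a * s (n - i) p.2 b)
    (Ob : E → A →+ A →+ A)
    (hOb : ∀ (α : E) (a b : A),
      Ob α a b = -∑ i ∈ Finset.Icc 1 m, ∑ p ∈ D α, s i p.1 a * s (m + 1 - i) p.2 b) :
    ∀ (α : E) (a b c : A),
      (∑ p ∈ D α, s 0 p.1 a * Ob p.2 b c) - Ob α (a * b) c + Ob α a (b * c)
        - ∑ p ∈ D α, Ob p.1 a b * s 0 p.2 c = 0 :=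
  stmt_11_general D hD m s hcartan Ob hOb
end

section
/- Let A be a commutative ring, E a set with integer structure constants n(α,β,γ) satisfying associativity (Σ_δ n(α,β,δ)n(δ,γ,ε) = Σ_δ n(β,γ,δ)n(α,δ,ε)), and s : E → End(A) satisfying the product formula. Let s¹,…,s^m (with s⁰ = s) satisfy the product formula up to order m: Σ_{i=0}^n s^i_α ∘ s^{n−i}_β = Σ_γ n(α,β,γ) s^n_γ for all 0 ≤ n ≤ m. Define Ob₀(α,β) = − Σ_{i=1}^m s^i_α ∘ s^{m+1−i}_β. Then Ob₀ is a 2-cocycle for d²₀: s_α ∘ Ob₀(β,γ) − Σ_δ n(α,β,δ) Ob₀(δ,γ) + Σ_δ n(β,γ,δ) Ob₀(α,δ) − Ob₀(α,β) ∘ s_γ = 0 for all α,β,γ ∈ E. -/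
/-!
Write `f a b c = s^a_α s^b_β s^c_γ`. The product formula in orders `1, …, m` expands both
structure-constant terms of the coboundary into sums of `f a b c` over `a + b + c = m + 1` with
`c ≥ 1, a + b ≥ 1`, resp. `a ≥ 1, b + c ≥ 1`. These differ only by the boundary triples with
`a = 0` and with `c = 0`, which cancel the composition terms `s_α ∘ Ob₀` and `Ob₀ ∘ s_γ`.
-/

open Finset

lemma sum_Icc_sum_range_succ_sub_sum_Icc_sum_range_succ {G : Type*} [AddCommGroup G]
    (f : ℕ → ℕ → ℕ → G) (m : ℕ) :
    (∑ i ∈ Icc 1 m, ∑ j ∈ range (i + 1), f j (i - j) (m + 1 - i)) -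
        ∑ i ∈ Icc 1 m, ∑ j ∈ range (m + 1 - i + 1), f i j (m + 1 - i - j) =
      (∑ i ∈ Icc 1 m, f 0 i (m + 1 - i)) - ∑ i ∈ Icc 1 m, f i (m + 1 - i) 0 := by
  -- both sides run over the triples `a + b + c = m + 1` with `a ≥ 1` and `c ≥ 1`
  have hinterior : ∑ i ∈ Icc 1 m, ∑ j ∈ range i, f (j + 1) (i - (j + 1)) (m + 1 - i) =
      ∑ i ∈ Icc 1 m, ∑ j ∈ range (m + 1 - i), f i j (m + 1 - i - j) := by
    calc _ = ∑ i ∈ Icc 1 m, ∑ a ∈ Icc 1 i, f a (i - a) (m + 1 - i) := by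
          refine sum_congr rfl fun i _ => ?_
          rw [← Ico_add_one_right_eq_Icc, sum_Ico_eq_sum_range]
          simp only [add_comm 1, Nat.add_sub_cancel]
      _ = ∑ a ∈ Icc 1 m, ∑ i ∈ Icc a m, f a (i - a) (m + 1 - i) :=
          sum_comm' fun i a => by simp only [mem_Icc]; omega
      _ = _ := by
          refine sum_congr rfl fun a _ => ?_
          rw [← Ico_add_one_right_eq_Icc, sum_Ico_eq_sum_range]
          refine sum_congr rfl fun b _ => ?_
          rw [Nat.add_sub_cancel_left, Nat.sub_sub]
  simp only [sum_range_succ', sum_range_succ _ (m + 1 - _), Nat.sub_self, Nat.sub_zero,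
    sum_add_distrib, hinterior]
  abel

section

variable {R E : Type*} [NonUnitalRing R]

def ProductFormulaUpTo (nn : E → E → E →₀ ℤ) (m : ℕ) (s : ℕ → E → R) : Prop :=
  ∀ n ≤ m, ∀ α β : E,
    ∑ i ∈ range (n + 1), s i α * s (n - i) β = (nn α β).sum fun γ c => c • s n γ

def obstruction (m : ℕ) (s : ℕ → E → R) (α β : E) : R :=
  -∑ i ∈ Icc 1 m, s i α * s (m + 1 - i) β

variable {nn : E → E → E →₀ ℤ} {m : ℕ} {s : ℕ → E → R}

lemma ProductFormulaUpTo.sum_smul_obstruction_left (hprod : ProductFormulaUpTo nn m s)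
    (α β γ : E) :
    ((nn α β).sum fun δ c => c • obstruction m s δ γ) =
      -∑ i ∈ Icc 1 m, ∑ j ∈ range (i + 1), s j α * s (i - j) β * s (m + 1 - i) γ := by
  simp_rw [obstruction, smul_neg, Finsupp.sum_neg, smul_sum, ← sum_mul]
  rw [neg_inj, Finsupp.sum, sum_comm]
  refine sum_congr rfl fun i hi => ?_
  rw [hprod i (mem_Icc.1 hi).2, Finsupp.sum_mul, Finsupp.sum]
  simp_rw [smul_mul_assoc]

lemma ProductFormulaUpTo.sum_smul_obstruction_right (hprod : ProductFormulaUpTo nn m s)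
    (α β γ : E) :
    ((nn β γ).sum fun δ c => c • obstruction m s α δ) =
      -∑ i ∈ Icc 1 m, ∑ j ∈ range (m + 1 - i + 1), s i α * s j β * s (m + 1 - i - j) γ := by
  simp_rw [obstruction, smul_neg, Finsupp.sum_neg, smul_sum, mul_assoc, ← mul_sum]
  rw [neg_inj, Finsupp.sum, sum_comm]
  refine sum_congr rfl fun i hi => ?_
  rw [hprod (m + 1 - i) (by grind), Finsupp.mul_sum, Finsupp.sum]
  simp_rw [mul_smul_comm]

theorem ProductFormulaUpTo.obstruction_isCocycle (hprod : ProductFormulaUpTo nn m s)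
    (α β γ : E) :
    s 0 α * obstruction m s β γ - ((nn α β).sum fun δ c => c • obstruction m s δ γ)
      + ((nn β γ).sum fun δ c => c • obstruction m s α δ) - obstruction m s α β * s 0 γ = 0 := by
  have hboundary := sum_Icc_sum_range_succ_sub_sum_Icc_sum_range_succ
    (fun a b c => s a α * s b β * s c γ) m
  rw [hprod.sum_smul_obstruction_left, hprod.sum_smul_obstruction_right,
    obstruction, obstruction, mul_neg, mul_sum, neg_mul, sum_mul]
  simp only [← mul_assoc]
  rw [← sub_eq_zero.mpr hboundary]
  abel

end

theorem stmt_12_general {A : Type*} [CommRing A] {E : Type*}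
    (nn : E → E → (E →₀ ℤ))
    (m : ℕ) (s : ℕ → E → A →+ A)
    (hprod : ∀ n, n ≤ m → ∀ α β : E,
      (∑ i ∈ Finset.range (n + 1), (s i α).comp (s (n - i) β)) =
        (nn α β).sum fun γ c => c • s n γ)
    (Ob : E → E → A →+ A)
    (hOb : ∀ α β : E, Ob α β = -∑ i ∈ Finset.Icc 1 m, (s i α).comp (s (m + 1 - i) β)) :
    ∀ α β γ : E,
      (s 0 α).comp (Ob β γ) - ((nn α β).sum fun δ c => c • Ob δ γ)
        + ((nn β γ).sum fun δ c => c • Ob α δ) - (Ob α β).comp (s 0 γ) = 0 := by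
  -- `End(A)` is the ring `AddMonoid.End A`, whose product is composition
  obtain rfl : Ob = obstruction (R := AddMonoid.End A) m s := funext₂ hOb
  exact ProductFormulaUpTo.obstruction_isCocycle (R := AddMonoid.End A) hprod

/-- The composition part `Ob₀` of the obstruction class of an order-`m` formal
deformation is a `d²₀`-cocycle. -/
theorem stmt_12 {A : Type*} [CommRing A] {E : Type*}
    (nn : E → E → (E →₀ ℤ))
    (hassoc : ∀ α β γ ε : E,
      ((nn α β).sum fun δ c => c * nn δ γ ε) = ((nn β γ).sum fun δ c => c * nn α δ ε))
    (m : ℕ) (hm : 1 ≤ m) (s : ℕ → E → A →+ A)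
    (hprod : ∀ n, n ≤ m → ∀ α β : E,
      (∑ i ∈ Finset.range (n + 1), (s i α).comp (s (n - i) β)) =
        (nn α β).sum fun γ c => c • s n γ)
    (Ob : E → E → A →+ A)
    (hOb : ∀ α β : E, Ob α β = -∑ i ∈ Finset.Icc 1 m, (s i α).comp (s (m + 1 - i) β)) :
    ∀ α β γ : E,
      (s 0 α).comp (Ob β γ) - ((nn α β).sum fun δ c => c • Ob δ γ)
        + ((nn β γ).sum fun δ c => c • Ob α δ) - (Ob α β).comp (s 0 γ) = 0 :=
  stmt_12_general nn m s hprod Ob hOb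
end

section
/- Let A be a commutative ring, E a commutative monoid with finite decompositions, and s : E → End(A) satisfying the Cartan formula. Let s¹,…,s^m satisfy the Cartan formula up to order m (as above). Then there exists s^{m+1} : E → End(A) making s⁰,…,s^{m+1} satisfy the Cartan formula up to order m+1 if and only if the 2-cocycle Ob₁ (defined by (Ob₁)_α(a⊗b) = −Σ_{i=1}^m Σ_{β+γ=α} s^i_β(a) s^{m+1−i}_γ(b)) equals d¹₁ f for some f : E → End(A), where (d¹₁f)_α(a⊗b) = Σ_{β+γ=α} s_β(a) f_γ(b) − f_α(ab) + Σ_{β+γ=α} f_β(a) s_γ(b). -/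
open Finset

theorem Finset.sum_range_add_two_eq_add_sum_Icc_add {M : Type*} [AddCommMonoid M]
    (m : ℕ) (g : ℕ → M) :
    ∑ i ∈ range (m + 2), g i = g 0 + ∑ i ∈ Icc 1 m, g i + g (m + 1) := by
  rw [sum_range_succ, range_eq_Ico, sum_eq_sum_Ico_succ_bot (by omega)]
  rfl

section Cartan

variable {A E : Type*} [Ring A] (D : E → Finset (E × E))

/-- `D α` plays the role of the set of decompositions `β + γ = α`. -/
def SatisfiesCartanAt (S : ℕ → E → A →+ A) (n : ℕ) : Prop :=
  ∀ (α : E) (a b : A),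
    S n α (a * b) = ∑ i ∈ range (n + 1), ∑ p ∈ D α, S i p.1 a * S (n - i) p.2 b

/-- The paper's `Ob₁`. -/
def cartanObstruction (s : ℕ → E → A →+ A) (m : ℕ) (α : E) (a b : A) : A :=
  -∑ i ∈ Icc 1 m, ∑ p ∈ D α, s i p.1 a * s (m + 1 - i) p.2 b

/-- The paper's `d¹₁ f`, with `s` in the role of `s⁰`. -/
def cartanCoboundary (s f : E → A →+ A) (α : E) (a b : A) : A :=
  (∑ p ∈ D α, s p.1 a * f p.2 b) - f α (a * b) + ∑ p ∈ D α, f p.1 a * s p.2 b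

variable {D}

theorem SatisfiesCartanAt.congr {s S : ℕ → E → A →+ A} {n : ℕ}
    (h : SatisfiesCartanAt D s n) (hS : ∀ i ≤ n, S i = s i) : SatisfiesCartanAt D S n := by
  intro α a b
  rw [hS n le_rfl, h α a b]
  refine sum_congr rfl fun i hi => ?_
  rw [mem_range] at hi
  rw [hS i (by omega), hS (n - i) (by omega)]

/-- The two extreme terms of the Cartan sum at order `m + 1` involve `S^{m+1}`, the middle
ones only `s¹, …, sᵐ`. -/
theorem satisfiesCartanAt_succ_iff {s S : ℕ → E → A →+ A} {m : ℕ}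
    (hS : ∀ i ≤ m, S i = s i) :
    SatisfiesCartanAt D S (m + 1) ↔
      ∀ α a b, cartanObstruction D s m α a b = cartanCoboundary D (s 0) (S (m + 1)) α a b := by
  have hmid : ∀ α a b, ∑ i ∈ Icc 1 m, ∑ p ∈ D α, S i p.1 a * S (m + 1 - i) p.2 b =
      ∑ i ∈ Icc 1 m, ∑ p ∈ D α, s i p.1 a * s (m + 1 - i) p.2 b := fun α a b => by
    refine sum_congr rfl fun i hi => ?_
    rw [mem_Icc] at hi
    rw [hS i (by omega), hS (m + 1 - i) (by omega)]
  simp only [SatisfiesCartanAt, cartanObstruction, cartanCoboundary,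
    sum_range_add_two_eq_add_sum_Icc_add, hmid, hS 0 (Nat.zero_le m), Nat.sub_zero,
    Nat.sub_self]
  refine forall₃_congr fun α a b => ⟨fun h => ?_, fun h => ?_⟩ <;>
    · rw [← sub_eq_zero] at h ⊢
      rw [← h]
      abel

end Cartan

theorem stmt_13_general {A : Type*} [CommRing A] {E : Type*}
    (D : E → Finset (E × E))
    (m : ℕ) (s : ℕ → E → A →+ A)
    (hcartan : ∀ n, n ≤ m → ∀ (α : E) (a b : A),
      s n α (a * b) =
        ∑ i ∈ Finset.range (n + 1), ∑ p ∈ D α, s i p.1 a * s (n - i) p.2 b) :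
    (∃ S : ℕ → E → A →+ A, (∀ i, i ≤ m → S i = s i) ∧
      (∀ n, n ≤ m + 1 → ∀ (α : E) (a b : A),
        S n α (a * b) =
          ∑ i ∈ Finset.range (n + 1), ∑ p ∈ D α, S i p.1 a * S (n - i) p.2 b)) ↔
    (∃ f : E → A →+ A, ∀ (α : E) (a b : A),
      (-∑ i ∈ Finset.Icc 1 m, ∑ p ∈ D α, s i p.1 a * s (m + 1 - i) p.2 b) =
        (∑ p ∈ D α, s 0 p.1 a * f p.2 b) - f α (a * b)
          + ∑ p ∈ D α, f p.1 a * s 0 p.2 b) := by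
  constructor
  · rintro ⟨S, hSs, hS⟩
    exact ⟨S (m + 1), (satisfiesCartanAt_succ_iff hSs).mp (hS (m + 1) le_rfl)⟩
  · rintro ⟨f, hf⟩
    have hSs : ∀ i ≤ m, Function.update s (m + 1) f i = s i := fun i hi =>
      Function.update_of_ne (by omega) f s
    refine ⟨Function.update s (m + 1) f, hSs, fun n hn => ?_⟩
    rcases Nat.lt_or_ge n (m + 1) with hlt | hge
    · exact SatisfiesCartanAt.congr (hcartan n (by omega)) fun i hi => hSs i (by omega)
    · obtain rfl : n = m + 1 := by omega
      refine (satisfiesCartanAt_succ_iff (D := D) hSs).mpr ?_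
      rw [Function.update_self]
      exact hf

/-- An order-`m` deformation of the Cartan formula extends to order `m + 1` if and only
if the obstruction `Ob₁` is the `d¹₁`-coboundary of some 1-cochain. -/
theorem stmt_13 {A : Type*} [CommRing A] {E : Type*} [AddCommMonoid E]
    (D : E → Finset (E × E)) (hD : ∀ (α : E) (p : E × E), p ∈ D α ↔ p.1 + p.2 = α)
    (m : ℕ) (hm : 1 ≤ m) (s : ℕ → E → A →+ A)
    (hcartan : ∀ n, n ≤ m → ∀ (α : E) (a b : A),
      s n α (a * b) =
        ∑ i ∈ Finset.range (n + 1), ∑ p ∈ D α, s i p.1 a * s (n - i) p.2 b) :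
    (∃ S : ℕ → E → A →+ A, (∀ i, i ≤ m → S i = s i) ∧
      (∀ n, n ≤ m + 1 → ∀ (α : E) (a b : A),
        S n α (a * b) =
          ∑ i ∈ Finset.range (n + 1), ∑ p ∈ D α, S i p.1 a * S (n - i) p.2 b)) ↔
    (∃ f : E → A →+ A, ∀ (α : E) (a b : A),
      (-∑ i ∈ Finset.Icc 1 m, ∑ p ∈ D α, s i p.1 a * s (m + 1 - i) p.2 b) =
        (∑ p ∈ D α, s 0 p.1 a * f p.2 b) - f α (a * b)
          + ∑ p ∈ D α, f p.1 a * s 0 p.2 b) :=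
  stmt_13_general D m s hcartan
end

section
/- Let A be a commutative ring with structure constants n(α,β,γ) on a set E, and s : E → End(A) satisfying the product formula. Suppose s¹,…,s^m satisfy the product formula up to order m. Then there exists s^{m+1} : E → End(A) such that s⁰,…,s^{m+1} satisfy the product formula up to order m+1 (i.e. Σ_{i=0}^{m+1} s^i_α ∘ s^{m+1−i}_β = Σ_γ n(α,β,γ) s^{m+1}_γ for all α,β) if and only if the 2-cochain Ob₀(α,β) = −Σ_{i=1}^m s^i_α ∘ s^{m+1−i}_β equals d¹₀ f for some f : E → End(A), where (d¹₀f)(α,β) = s_α ∘ f(β) − Σ_γ n(α,β,γ) f(γ) + f(α) ∘ s_β. -/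
/-!
Since `s⁰, …, sᵐ` are fixed, the order-`(m + 1)` product formula is an equation in the single
unknown `s^{m+1}`: splitting off the two terms `i = 0` and `i = m + 1` of its left-hand side,
it says exactly that `Ob₀ = d¹₀ s^{m+1}`. The lower-order formulas do not involve `s^{m+1}`.
-/

open Finset

theorem Finset.sum_range_sub_eq_ends_add_sum_Icc {X : Type*} [AddCommMonoid X] (g : ℕ → ℕ → X)
    (m : ℕ) :
    ∑ i ∈ range (m + 2), g i (m + 1 - i) =
      g 0 (m + 1) + ∑ i ∈ Icc 1 m, g i (m + 1 - i) + g (m + 1) 0 := by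
  rw [sum_range_succ, sum_range_succ', Nat.sub_self, Nat.sub_zero, range_eq_Ico,
    sum_Ico_add' (fun i => g i (m + 1 - i)), zero_add, Ico_add_one_right_eq_Icc]
  abel

namespace ProductFormula

variable {M E : Type*} [AddCommGroup M] (nn : E → E → E →₀ ℤ)

def HoldsAt (s : ℕ → E → M →+ M) (n : ℕ) (α β : E) : Prop :=
  ∑ i ∈ range (n + 1), (s i α).comp (s (n - i) β) = (nn α β).sum fun γ c => c • s n γ

def obstruction (s : ℕ → E → M →+ M) (m : ℕ) (α β : E) : M →+ M :=
  -∑ i ∈ Icc 1 m, (s i α).comp (s (m + 1 - i) β)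

def coboundary (s₀ f : E → M →+ M) (α β : E) : M →+ M :=
  (s₀ α).comp (f β) - ((nn α β).sum fun γ c => c • f γ) + (f α).comp (s₀ β)

variable {nn}

theorem holdsAt_congr {s t : ℕ → E → M →+ M} {n : ℕ} (hst : ∀ i ≤ n, s i = t i) (α β : E) :
    HoldsAt nn s n α β ↔ HoldsAt nn t n α β := by
  have hsum : ∀ i ∈ range (n + 1), (s i α).comp (s (n - i) β) = (t i α).comp (t (n - i) β) := by
    intro i hi
    rw [hst i (Nat.lt_succ_iff.mp (mem_range.mp hi)), hst (n - i) (Nat.sub_le n i)]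
  rw [HoldsAt, HoldsAt, sum_congr rfl hsum, hst n le_rfl]

theorem obstruction_congr {s t : ℕ → E → M →+ M} {m : ℕ} (hst : ∀ i ≤ m, s i = t i) :
    obstruction s m = obstruction t m := by
  ext1 α; ext1 β
  refine congrArg Neg.neg (sum_congr rfl fun i hi => ?_)
  obtain ⟨hi₁, him⟩ := mem_Icc.mp hi
  rw [hst i him, hst (m + 1 - i) (by omega)]

theorem holdsAt_succ_iff (s : ℕ → E → M →+ M) (m : ℕ) (α β : E) :
    HoldsAt nn s (m + 1) α β ↔ obstruction s m α β = coboundary nn (s 0) (s (m + 1)) α β := by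
  rw [HoldsAt, obstruction, coboundary,
    sum_range_sub_eq_ends_add_sum_Icc (fun i j => (s i α).comp (s j β))]
  refine ⟨fun h => by rw [← h]; abel, fun h => ?_⟩
  rw [← sub_eq_zero] at h ⊢
  rw [← neg_eq_zero, ← h]
  abel

end ProductFormula

open ProductFormula in
theorem stmt_14_general {A : Type*} [CommRing A] {E : Type*}
    (nn : E → E → (E →₀ ℤ)) (m : ℕ) (s : ℕ → E → A →+ A)
    (hprod : ∀ n, n ≤ m → ∀ α β : E,
      (∑ i ∈ Finset.range (n + 1), (s i α).comp (s (n - i) β)) =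
        (nn α β).sum fun γ c => c • s n γ) :
    (∃ S : ℕ → E → A →+ A, (∀ i, i ≤ m → S i = s i) ∧
      (∀ n, n ≤ m + 1 → ∀ α β : E,
        (∑ i ∈ Finset.range (n + 1), (S i α).comp (S (n - i) β)) =
          (nn α β).sum fun γ c => c • S n γ)) ↔
    (∃ f : E → A →+ A, ∀ α β : E,
      (-∑ i ∈ Finset.Icc 1 m, (s i α).comp (s (m + 1 - i) β)) =
        (s 0 α).comp (f β) - ((nn α β).sum fun γ c => c • f γ)
          + (f α).comp (s 0 β)) := by
  constructor
  · rintro ⟨S, hS, hS_prod⟩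
    refine ⟨S (m + 1), fun α β => ?_⟩
    have h := (holdsAt_succ_iff S m α β).mp (hS_prod (m + 1) le_rfl α β)
    rwa [obstruction_congr hS, hS 0 m.zero_le] at h
  · rintro ⟨f, hf⟩
    let S := Function.update s (m + 1) f
    have hS : ∀ i ≤ m, S i = s i := fun i hi => Function.update_of_ne (by omega) f s
    have hSf : S (m + 1) = f := Function.update_self (m + 1) f s
    refine ⟨S, hS, fun n hn α β => ?_⟩
    obtain hn | rfl := Nat.lt_or_eq_of_le hn
    · exact (holdsAt_congr (fun i hi => hS i (by omega)) α β).mpr (hprod n (by omega) α β)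
    · rw [← HoldsAt, holdsAt_succ_iff, obstruction_congr hS, hS 0 m.zero_le, hSf]
      exact hf α β

/-- An order-`m` deformation of the product formula extends to order `m + 1` if and only
if the obstruction `Ob₀` is the `d¹₀`-coboundary of some 1-cochain. -/
theorem stmt_14 {A : Type*} [CommRing A] {E : Type*}
    (nn : E → E → (E →₀ ℤ)) (m : ℕ) (hm : 1 ≤ m) (s : ℕ → E → A →+ A)
    (hprod : ∀ n, n ≤ m → ∀ α β : E,
      (∑ i ∈ Finset.range (n + 1), (s i α).comp (s (n - i) β)) =
        (nn α β).sum fun γ c => c • s n γ) :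
    (∃ S : ℕ → E → A →+ A, (∀ i, i ≤ m → S i = s i) ∧
      (∀ n, n ≤ m + 1 → ∀ α β : E,
        (∑ i ∈ Finset.range (n + 1), (S i α).comp (S (n - i) β)) =
          (nn α β).sum fun γ c => c • S n γ)) ↔
    (∃ f : E → A →+ A, ∀ α β : E,
      (-∑ i ∈ Finset.Icc 1 m, (s i α).comp (s (m + 1 - i) β)) =
        (s 0 α).comp (f β) - ((nn α β).sum fun γ c => c • f γ)
          + (f α).comp (s 0 β)) :=
  stmt_14_general nn m s hprod
end

section
/- Let A be a commutative ring, E a commutative monoid with finite decompositions, and s : E → End(A). Suppose φ : A → A is a derivation and define f : E → End(A) by f = d⁰φ, i.e. f_α = s_α ∘ φ − φ ∘ s_α. If s satisfies the Cartan formula s_α(ab) = Σ_{β+γ=α} s_β(a)s_γ(b), then f satisfies the d¹₁-cocycle condition: for all α, a, b, Σ_{β+γ=α}( s_β(a) f_γ(b) + f_β(a) s_γ(b) ) = f_α(ab). -/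
/-! Expand `f_α(ab) = s_α(φ(ab)) - φ(s_α(ab))` with the Leibniz rule and the Cartan formula
into a sum over `β + γ = α`; the Leibniz rule applied once more to `φ(s_β(a) s_γ(b))` makes the
two sides agree term by term. -/

theorem stmt_15_general {A : Type*} [CommRing A] {E : Type*} [AddCommMonoid E]
    (D : E → Finset (E × E))
    (s : E → A →+ A)
    (hcartan : ∀ (α : E) (a b : A), s α (a * b) = ∑ p ∈ D α, s p.1 a * s p.2 b)
    (φ : A →+ A) (hder : ∀ a b : A, φ (a * b) = a * φ b + φ a * b)
    (f : E → A →+ A) (hf : ∀ α : E, f α = (s α).comp φ - φ.comp (s α)) :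
    ∀ (α : E) (a b : A),
      (∑ p ∈ D α, (s p.1 a * f p.2 b + f p.1 a * s p.2 b)) = f α (a * b) := by
  intro α a b
  have hf_apply (β : E) (x : A) : f β x = s β (φ x) - φ (s β x) := by simp [hf]
  rw [hf_apply, hder, map_add, hcartan, hcartan, hcartan, map_sum, ← Finset.sum_add_distrib,
    ← Finset.sum_sub_distrib]
  refine Finset.sum_congr rfl fun p _ => ?_
  rw [hf_apply, hf_apply, hder]
  ring

/-- For a derivation `φ`, the coboundary `f = d⁰φ`, `f_α = s_α ∘ φ − φ ∘ s_α`, is a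
`d¹₁`-cocycle, given the Cartan formula for `s`. -/
theorem stmt_15 {A : Type*} [CommRing A] {E : Type*} [AddCommMonoid E]
    (D : E → Finset (E × E)) (hD : ∀ (α : E) (p : E × E), p ∈ D α ↔ p.1 + p.2 = α)
    (s : E → A →+ A)
    (hcartan : ∀ (α : E) (a b : A), s α (a * b) = ∑ p ∈ D α, s p.1 a * s p.2 b)
    (φ : A →+ A) (hder : ∀ a b : A, φ (a * b) = a * φ b + φ a * b)
    (f : E → A →+ A) (hf : ∀ α : E, f α = (s α).comp φ - φ.comp (s α)) :
    ∀ (α : E) (a b : A),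
      (∑ p ∈ D α, (s p.1 a * f p.2 b + f p.1 a * s p.2 b)) = f α (a * b) :=
  stmt_15_general D s hcartan φ hder f hf
end

section
/- Let A be a commutative ring and let Φ_t = Σ_{n≥0} t^n φ_n and Ψ_t = Σ_{n≥0} t^n ψ_n be composition-inverse power series in End(A)[[t]] with φ₀ = ψ₀ = id_A (i.e. the degreewise compositions satisfy Σ_{i=0}^n φ_i ∘ ψ_{n−i} = 0 = Σ_{i=0}^n ψ_i ∘ φ_{n−i} for all n ≥ 1). If Φ_t is multiplicative (φ_n(ab) = Σ_{i=0}^n φ_i(a)φ_{n−i}(b) for all n, a, b), then Ψ_t is multiplicative as well. -/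
/-!
Extend `Φ_t` `t`-linearly to the additive endomorphism `Φ̂` of `A⟦t⟧` given by
`Φ̂(Σ tʲ xⱼ) = Σ tⁱ⁺ʲ φᵢ(xⱼ)`. This is an action of the ring `End(A)⟦t⟧` on `A⟦t⟧`, so `Φ_t Ψ_t = 1`
gives `Φ̂ ∘ Ψ̂ = id`. Multiplicativity of `Φ_t` says exactly that `Φ̂` is a multiplicative map of
`A⟦t⟧`, and `Φ̂` is injective since `φ₀` is. Hence
`Φ̂(Ψ̂(ab)) = ab = Φ̂(Ψ̂a) Φ̂(Ψ̂b) = Φ̂(Ψ̂a Ψ̂b)` forces `Ψ̂(ab) = Ψ̂a Ψ̂b`, and the coefficients of this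
identity are the multiplicativity of `Ψ_t`.
-/

open Finset

theorem AddMonoid.End.finsetSum_apply {ι M : Type*} [AddCommMonoid M] (s : Finset ι)
    (f : ι → AddMonoid.End M) (m : M) : (∑ i ∈ s, f i) m = ∑ i ∈ s, f i m :=
  AddMonoidHom.finsetSum_apply f s m

namespace PowerSeries

variable {A : Type*}

section Semiring

variable [Semiring A]

noncomputable def applyEnd (F : (AddMonoid.End A)⟦X⟧) : A⟦X⟧ →+ A⟦X⟧ where
  toFun x := mk fun n => ∑ p ∈ antidiagonal n, coeff p.1 F (coeff p.2 x)
  map_zero' := by ext; simp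
  map_add' x y := by ext; simp [sum_add_distrib]

theorem coeff_applyEnd (F : (AddMonoid.End A)⟦X⟧) (x : A⟦X⟧) (n : ℕ) :
    coeff n (applyEnd F x) = ∑ p ∈ antidiagonal n, coeff p.1 F (coeff p.2 x) := by
  simp [applyEnd]

theorem applyEnd_mul_apply (F G : (AddMonoid.End A)⟦X⟧) (x : A⟦X⟧) :
    applyEnd (F * G) x = applyEnd F (applyEnd G x) := by
  ext n
  simp only [coeff_applyEnd, coeff_mul, AddMonoid.End.finsetSum_apply, map_sum,
    AddMonoid.End.coe_mul, Function.comp_apply, sum_sigma']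
  refine sum_nbij' (fun x => ⟨(x.2.1, x.2.2 + x.1.2), (x.2.2, x.1.2)⟩)
    (fun x => ⟨(x.1.1 + x.2.1, x.2.2), (x.1.1, x.2.1)⟩) ?_ ?_ ?_ ?_ ?_ <;>
    aesop (add simp add_assoc)

def IsMultiplicative (F : (AddMonoid.End A)⟦X⟧) : Prop :=
  ∀ n a b, coeff n F (a * b) = ∑ p ∈ antidiagonal n, coeff p.1 F a * coeff p.2 F b

theorem IsMultiplicative.applyEnd_mul {F : (AddMonoid.End A)⟦X⟧} (hF : IsMultiplicative F)
    (x y : A⟦X⟧) : applyEnd F (x * y) = applyEnd F x * applyEnd F y := by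
  ext n
  simp only [coeff_applyEnd, coeff_mul, map_sum, hF _ _ _, sum_mul_sum, sum_sigma']
  refine sum_nbij'
    (fun x => ⟨(x.2.2.1 + x.2.1.1, x.2.2.2 + x.2.1.2), (x.2.2.1, x.2.1.1), (x.2.2.2, x.2.1.2)⟩)
    (fun y => ⟨(y.2.1.1 + y.2.2.1, y.2.1.2 + y.2.2.2), (y.2.1.2, y.2.2.2), (y.2.1.1, y.2.2.1)⟩)
    ?_ ?_ ?_ ?_ ?_ <;> aesop (add simp [add_assoc, add_left_comm])

theorem coeff_applyEnd_C (F : (AddMonoid.End A)⟦X⟧) (a : A) (n : ℕ) :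
    coeff n (applyEnd F (C a)) = coeff n F a := by
  rw [coeff_applyEnd, sum_eq_single (n, 0)] <;> aesop (add simp coeff_C)

theorem applyEnd_one (x : A⟦X⟧) : applyEnd 1 x = x := by
  ext n
  rw [coeff_applyEnd, sum_eq_single (0, n)] <;> aesop (add simp coeff_one)

end Semiring

section Ring

variable [Ring A]

theorem applyEnd_injective {F : (AddMonoid.End A)⟦X⟧} (hF : Function.Injective ⇑(coeff 0 F)) :
    Function.Injective (applyEnd F) := by
  refine (injective_iff_map_eq_zero _).mpr fun x hx => ext fun n => ?_
  induction n using Nat.strong_induction_on with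
  | _ n ih =>
    have hxn := congr(coeff n $hx)
    rw [map_zero, coeff_applyEnd, sum_eq_single (0, n)] at hxn
    · rw [map_zero]
      exact hF (hxn.trans (map_zero _).symm)
    · rintro ⟨i, j⟩ hij hij_ne
      rw [HasAntidiagonal.mem_antidiagonal] at hij
      simp only [ne_eq, Prod.mk.injEq] at hij_ne
      rw [ih j (by omega), map_zero, map_zero]
    · simp

theorem IsMultiplicative.of_mul_eq_one {F G : (AddMonoid.End A)⟦X⟧} (hF : IsMultiplicative F)
    (hF0 : Function.Injective ⇑(coeff 0 F)) (hFG : F * G = 1) : IsMultiplicative G := by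
  intro n a b
  have hinv : ∀ x, applyEnd F (applyEnd G x) = x := fun x => by
    rw [← applyEnd_mul_apply, hFG, applyEnd_one]
  have key : applyEnd G (C (a * b)) = applyEnd G (C a) * applyEnd G (C b) :=
    applyEnd_injective hF0 <| by rw [hF.applyEnd_mul, hinv, hinv, hinv, map_mul]
  simpa only [coeff_applyEnd_C, coeff_mul] using congr(coeff n $key)

end Ring

end PowerSeries

open PowerSeries in
theorem stmt_17_general {A : Type*} [CommRing A] (φ ψ : ℕ → A →+ A)
    (hφ0 : φ 0 = AddMonoidHom.id A) (hψ0 : ψ 0 = AddMonoidHom.id A)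
    (hinv₁ : ∀ n, 1 ≤ n → (∑ i ∈ Finset.range (n + 1), (φ i).comp (ψ (n - i))) = 0)
    (hmul : ∀ (n : ℕ) (a b : A),
      φ n (a * b) = ∑ i ∈ Finset.range (n + 1), φ i a * φ (n - i) b) :
    ∀ (n : ℕ) (a b : A),
      ψ n (a * b) = ∑ i ∈ Finset.range (n + 1), ψ i a * ψ (n - i) b := by
  -- `A →+ A` and `AddMonoid.End A` are defeq but coerce to functions differently.
  obtain ⟨Φ, hΦ⟩ : ∃ Φ : (AddMonoid.End A)⟦X⟧, ∀ n a, coeff n Φ a = φ n a :=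
    ⟨mk φ, fun n a => congr($(coeff_mk (R := AddMonoid.End A) n φ) a)⟩
  obtain ⟨Ψ, hΨ⟩ : ∃ Ψ : (AddMonoid.End A)⟦X⟧, ∀ n a, coeff n Ψ a = ψ n a :=
    ⟨mk ψ, fun n a => congr($(coeff_mk (R := AddMonoid.End A) n ψ) a)⟩
  have hΦmul : IsMultiplicative Φ := fun n a b => by
    simpa only [hΦ, Nat.sum_antidiagonal_eq_sum_range_succ (fun i j => φ i a * φ j b)] using
      hmul n a b
  have hΦ0 : Function.Injective ⇑(coeff 0 Φ) := fun a b h => by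
    simpa only [hΦ, hφ0, AddMonoidHom.id_apply] using h
  have hΦΨ : Φ * Ψ = 1 := by
    ext n a
    rw [coeff_mul, AddMonoid.End.finsetSum_apply, coeff_one]
    simp only [AddMonoid.End.coe_mul, Function.comp_apply, hΦ, hΨ,
      Nat.sum_antidiagonal_eq_sum_range_succ (fun i j => φ i (ψ j a))]
    rcases n with _ | n
    · simp [hφ0, hψ0]
    · simpa using congr($(hinv₁ (n + 1) (by omega)) a)
  intro n a b
  simpa only [hΨ, Nat.sum_antidiagonal_eq_sum_range_succ (fun i j => ψ i a * ψ j b)] using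
    hΦmul.of_mul_eq_one hΦ0 hΦΨ n a b

/-- If `Φ_t` and `Ψ_t` are composition-inverse power series of additive endomorphisms
with constant term the identity and `Φ_t` is multiplicative, then so is `Ψ_t`. -/
theorem stmt_17 {A : Type*} [CommRing A] (φ ψ : ℕ → A →+ A)
    (hφ0 : φ 0 = AddMonoidHom.id A) (hψ0 : ψ 0 = AddMonoidHom.id A)
    (hinv₁ : ∀ n, 1 ≤ n → (∑ i ∈ Finset.range (n + 1), (φ i).comp (ψ (n - i))) = 0)
    (hinv₂ : ∀ n, 1 ≤ n → (∑ i ∈ Finset.range (n + 1), (ψ i).comp (φ (n - i))) = 0)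
    (hmul : ∀ (n : ℕ) (a b : A),
      φ n (a * b) = ∑ i ∈ Finset.range (n + 1), φ i a * φ (n - i) b) :
    ∀ (n : ℕ) (a b : A),
      ψ n (a * b) = ∑ i ∈ Finset.range (n + 1), ψ i a * ψ (n - i) b :=
  stmt_17_general φ ψ hφ0 hψ0 hinv₁ hmul
end

section
/- Let A be a commutative ring, E a commutative monoid with finite decompositions, and σ^t_* = Σ_n t^n s^n_* a formal deformation satisfying the Cartan formula degreewise (s^n_α(ab) = Σ_{i=0}^n Σ_{β+γ=α} s^i_β(a)s^{n−i}_γ(b)). Let Φ_t = Σ_n t^n φ_n be a formal automorphism on A (multiplicative, φ₀ = id) with multiplicative inverse Φ_t^{-1}. Then the conjugate power series Φ_t^{-1} σ^t_* Φ_t (with α-component at degree n given by Σ_{i+j+k=n} ψ_i ∘ s^j_α ∘ φ_k, where ψ_i are the coefficients of Φ_t^{-1}) again satisfies the Cartan formula degreewise. -/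
/-!
Encode a family `(fₙ)` as the `t`-linear operator `f_t = Σₙ tⁿ fₙ` on `A⟦t⟧`. The degreewise
Cartan formula for `s` becomes the single identity `σ_α(ab) = Σ_{β+γ=α} σ_β(a) σ_γ(b)` of
operators on `A⟦t⟧`, and multiplicativity of `Φ_t`, `Φ_t⁻¹` becomes `Φ(ab) = Φ(a) Φ(b)`.
Composing, `Φ⁻¹ σ_α Φ` satisfies the same identity, and evaluating it on constant series and
reading off the coefficient of `tⁿ` gives the Cartan formula for `τⁿ_α`.
-/

open Finset PowerSeries

theorem sum_antidiagonal_interchange {M : Type*} [AddCommMonoid M] (m : ℕ)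
    (G : ℕ → ℕ → ℕ → ℕ → M) :
    ∑ p ∈ antidiagonal m, ∑ q ∈ antidiagonal p.1, ∑ r ∈ antidiagonal p.2, G q.1 q.2 r.1 r.2 =
      ∑ p ∈ antidiagonal m, ∑ q ∈ antidiagonal p.1, ∑ r ∈ antidiagonal p.2,
        G q.1 r.1 q.2 r.2 := by
  simp only [Finset.sum_sigma']
  apply Finset.sum_nbij' (fun ⟨⟨_, _⟩, ⟨⟨i, j⟩, ⟨k, l⟩⟩⟩ ↦ ⟨⟨i + k, j + l⟩, ⟨⟨i, k⟩, ⟨j, l⟩⟩⟩)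
    (fun ⟨⟨_, _⟩, ⟨⟨i, j⟩, ⟨k, l⟩⟩⟩ ↦ ⟨⟨i + k, j + l⟩, ⟨⟨i, k⟩, ⟨j, l⟩⟩⟩) <;>
    aesop (add simp [add_assoc, add_comm, add_left_comm])

section SeriesOp

variable {R S T U : Type*} [Semiring R] [Semiring S] [Semiring T] [Semiring U]

noncomputable def seriesOp (f : ℕ → R →+ S) : R⟦X⟧ →+ S⟦X⟧ where
  toFun a := PowerSeries.mk fun m => ∑ p ∈ antidiagonal m, f p.1 (coeff p.2 a)
  map_zero' := by ext; simp
  map_add' a b := by ext; simp [sum_add_distrib]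

@[simp]
theorem coeff_seriesOp (f : ℕ → R →+ S) (a : R⟦X⟧) (m : ℕ) :
    coeff m (seriesOp f a) = ∑ p ∈ antidiagonal m, f p.1 (coeff p.2 a) := by
  simp [seriesOp]

theorem seriesOp_C (f : ℕ → R →+ S) (a : R) :
    seriesOp f (C a) = PowerSeries.mk fun n => f n a := by
  ext m
  rw [coeff_seriesOp, coeff_mk, sum_eq_single (m, 0)]
  · simp
  · rintro ⟨i, j⟩ hij hne
    have hj : j ≠ 0 := by rintro rfl; simp_all
    simp [coeff_C, hj]
  · simp

theorem seriesOp_mul_of_cartan {W : Type*} (P : Finset W) (t : ℕ → R →+ S)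
    (u v : W → ℕ → R →+ S)
    (hcartan : ∀ n x y, t n (x * y) = ∑ r ∈ antidiagonal n, ∑ w ∈ P, u w r.1 x * v w r.2 y)
    (a b : R⟦X⟧) :
    seriesOp t (a * b) = ∑ w ∈ P, seriesOp (u w) a * seriesOp (v w) b := by
  ext m
  set G : ℕ → ℕ → ℕ → ℕ → S := fun i j k l =>
    ∑ w ∈ P, u w i (coeff k a) * v w j (coeff l b)
  calc coeff m (seriesOp t (a * b))
      = ∑ p ∈ antidiagonal m, ∑ r ∈ antidiagonal p.1, ∑ q ∈ antidiagonal p.2,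
          G r.1 r.2 q.1 q.2 := by
        simp only [coeff_seriesOp, coeff_mul, map_sum, hcartan, G]
        exact sum_congr rfl fun p _ => sum_comm
    _ = ∑ p ∈ antidiagonal m, ∑ q ∈ antidiagonal p.1, ∑ r ∈ antidiagonal p.2,
          G q.1 r.1 q.2 r.2 := sum_antidiagonal_interchange m G
    _ = coeff m (∑ w ∈ P, seriesOp (u w) a * seriesOp (v w) b) := by
        simp only [map_sum, coeff_mul, coeff_seriesOp, sum_mul_sum, G, sum_comm (s := P)]

theorem seriesOp_mul (f : ℕ → R →+ S)
    (hf : ∀ n x y, f n (x * y) = ∑ r ∈ antidiagonal n, f r.1 x * f r.2 y) (a b : R⟦X⟧) :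
    seriesOp f (a * b) = seriesOp f a * seriesOp f b := by
  simpa using seriesOp_mul_of_cartan (univ : Finset Unit) f (fun _ => f) (fun _ => f)
    (by simpa using hf) a b

theorem coeff_seriesOp_seriesOp_seriesOp_C (φ : ℕ → R →+ S) (s : ℕ → S →+ T) (ψ : ℕ → T →+ U)
    (n : ℕ) (a : R) :
    coeff n (seriesOp ψ (seriesOp s (seriesOp φ (C a)))) =
      (∑ i ∈ range (n + 1), ∑ j ∈ range (n + 1 - i),
        (ψ i).comp ((s j).comp (φ (n - i - j)))) a := by
  simp only [seriesOp_C, coeff_seriesOp, coeff_mk, map_sum, AddMonoidHom.finsetSum_apply,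
    AddMonoidHom.coe_comp, Function.comp_apply]
  rw [Nat.sum_antidiagonal_eq_sum_range_succ
    (fun i k => ∑ q ∈ antidiagonal k, ψ i (s q.1 (φ q.2 a)))]
  refine sum_congr rfl fun i hi => ?_
  rw [Nat.sum_antidiagonal_eq_sum_range_succ (fun j k => ψ i (s j (φ k a))),
    Nat.sub_add_comm (mem_range_succ_iff.mp hi)]

end SeriesOp

theorem stmt_18_general {A : Type*} [CommRing A] {E : Type*} [AddCommMonoid E]
    (D : E → Finset (E × E))
    (s : ℕ → E → A →+ A)
    (hcartan : ∀ (n : ℕ) (α : E) (a b : A),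
      s n α (a * b) =
        ∑ i ∈ Finset.range (n + 1), ∑ p ∈ D α, s i p.1 a * s (n - i) p.2 b)
    (φ ψ : ℕ → A →+ A)
    (hφmul : ∀ (n : ℕ) (a b : A),
      φ n (a * b) = ∑ i ∈ Finset.range (n + 1), φ i a * φ (n - i) b)
    (hψmul : ∀ (n : ℕ) (a b : A),
      ψ n (a * b) = ∑ i ∈ Finset.range (n + 1), ψ i a * ψ (n - i) b)
    (τ : ℕ → E → A →+ A)
    (hτ : ∀ (n : ℕ) (α : E),
      τ n α = ∑ i ∈ Finset.range (n + 1), ∑ j ∈ Finset.range (n + 1 - i),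
        (ψ i).comp ((s j α).comp (φ (n - i - j)))) :
    ∀ (n : ℕ) (α : E) (a b : A),
      τ n α (a * b) =
        ∑ i ∈ Finset.range (n + 1), ∑ p ∈ D α, τ i p.1 a * τ (n - i) p.2 b := by
  intro n α a b
  have hφ k x y : φ k (x * y) = ∑ r ∈ antidiagonal k, φ r.1 x * φ r.2 y := by
    rw [hφmul, Nat.sum_antidiagonal_eq_sum_range_succ (fun i j => φ i x * φ j y)]
  have hψ k x y : ψ k (x * y) = ∑ r ∈ antidiagonal k, ψ r.1 x * ψ r.2 y := by
    rw [hψmul, Nat.sum_antidiagonal_eq_sum_range_succ (fun i j => ψ i x * ψ j y)]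
  have hs k x y :
      s k α (x * y) = ∑ r ∈ antidiagonal k, ∑ p ∈ D α, s r.1 p.1 x * s r.2 p.2 y := by
    rw [hcartan,
      Nat.sum_antidiagonal_eq_sum_range_succ (fun i j => ∑ p ∈ D α, s i p.1 x * s j p.2 y)]
  let conj (β : E) : A⟦X⟧ →+ A⟦X⟧ :=
    (seriesOp ψ).comp ((seriesOp (s · β)).comp (seriesOp φ))
  have hτ_coeff k β x : τ k β x = coeff k (conj β (C x)) := by
    rw [hτ, ← coeff_seriesOp_seriesOp_seriesOp_C]
    rfl
  have hconj_mul : conj α (C a * C b) = ∑ p ∈ D α, conj p.1 (C a) * conj p.2 (C b) := by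
    simp only [conj, AddMonoidHom.comp_apply, seriesOp_mul φ hφ, map_sum, seriesOp_mul ψ hψ,
      seriesOp_mul_of_cartan (D α) (s · α) (fun p k => s k p.1) (fun p k => s k p.2) hs]
  rw [← Nat.sum_antidiagonal_eq_sum_range_succ (fun i j => ∑ p ∈ D α, τ i p.1 a * τ j p.2 b),
    sum_comm, hτ_coeff, map_mul, hconj_mul, map_sum]
  simp only [coeff_mul, hτ_coeff]

/-- Conjugating a formal deformation of the Cartan formula by a formal automorphism
(with multiplicative inverse) again yields a family satisfying the Cartan formula
degreewise. -/
theorem stmt_18 {A : Type*} [CommRing A] {E : Type*} [AddCommMonoid E]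
    (D : E → Finset (E × E)) (hD : ∀ (α : E) (p : E × E), p ∈ D α ↔ p.1 + p.2 = α)
    (s : ℕ → E → A →+ A)
    (hcartan : ∀ (n : ℕ) (α : E) (a b : A),
      s n α (a * b) =
        ∑ i ∈ Finset.range (n + 1), ∑ p ∈ D α, s i p.1 a * s (n - i) p.2 b)
    (φ ψ : ℕ → A →+ A)
    (hφ0 : φ 0 = AddMonoidHom.id A) (hψ0 : ψ 0 = AddMonoidHom.id A)
    (hinv₁ : ∀ n, 1 ≤ n → (∑ i ∈ Finset.range (n + 1), (φ i).comp (ψ (n - i))) = 0)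
    (hinv₂ : ∀ n, 1 ≤ n → (∑ i ∈ Finset.range (n + 1), (ψ i).comp (φ (n - i))) = 0)
    (hφmul : ∀ (n : ℕ) (a b : A),
      φ n (a * b) = ∑ i ∈ Finset.range (n + 1), φ i a * φ (n - i) b)
    (hψmul : ∀ (n : ℕ) (a b : A),
      ψ n (a * b) = ∑ i ∈ Finset.range (n + 1), ψ i a * ψ (n - i) b)
    (τ : ℕ → E → A →+ A)
    (hτ : ∀ (n : ℕ) (α : E),
      τ n α = ∑ i ∈ Finset.range (n + 1), ∑ j ∈ Finset.range (n + 1 - i),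
        (ψ i).comp ((s j α).comp (φ (n - i - j)))) :
    ∀ (n : ℕ) (α : E) (a b : A),
      τ n α (a * b) =
        ∑ i ∈ Finset.range (n + 1), ∑ p ∈ D α, τ i p.1 a * τ (n - i) p.2 b :=
  stmt_18_general D s hcartan φ ψ hφmul hψmul τ hτ
end
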